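/- arXiv:2101.08623 — 5 statements merged into one kernel-verified Lean document; each statement's English description precedes it below -/
import Mathlib

section
/- Let {Y_t} be a stationary process on a finite alphabet {1,...,K} with stationary distribution p_i = P(Y_t = i) and self-transition probabilities p_{i→i} = P(Y_t = i | Y_{t-1} = i) (with p_{i→i} defined arbitrarily if p_i = 0). Define the binary KL divergence d(a||b) = a log(a/b) + (1−a) log((1−a)/(1−b)). Then ∑_i p_i · d(p_{i→i} || p_i) ≤ I(Y_t; Y_{t-1}). -/
/-!
Fix a row `i` of the joint law. Its contribution `∑_j J i j log (J i j / (p i p j))` to the mutual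
information is the relative entropy of the `i`-th row against the product weights. Merging all
columns `j ≠ i` into one cell can only decrease it (log-sum inequality, i.e. Jensen for the convex
function `x log x`), and the merged two-cell expression is exactly `p i * d (pii i) (p i)`.
-/

open Real Finset

noncomputable def binaryKL (a b : ℝ) : ℝ :=
  a * log (a / b) + (1 - a) * log ((1 - a) / (1 - b))

/-- The log-sum inequality: Jensen for `x log x` with weights `b i / ∑ b`. -/
theorem Real.sum_mul_log_div_sum_le {ι : Type*} (s : Finset ι) (a b : ι → ℝ)
    (ha : ∀ i ∈ s, 0 ≤ a i) (hb : ∀ i ∈ s, 0 < b i) :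
    (∑ i ∈ s, a i) * log ((∑ i ∈ s, a i) / ∑ i ∈ s, b i) ≤ ∑ i ∈ s, a i * log (a i / b i) := by
  rcases s.eq_empty_or_nonempty with rfl | hs
  · simp
  set B := ∑ i ∈ s, b i
  have hB : 0 < B := sum_pos hb hs
  have jensen := convexOn_mul_log.map_sum_le (t := s) (w := fun i ↦ b i / B)
    (p := fun i ↦ a i / b i) (fun i hi ↦ (div_pos (hb i hi) hB).le)
    (by rw [← sum_div, div_self hB.ne'])
    (fun i hi ↦ Set.mem_Ici.2 (div_nonneg (ha i hi) (hb i hi).le))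
  simp only [smul_eq_mul] at jensen
  have hmean : ∑ i ∈ s, b i / B * (a i / b i) = (∑ i ∈ s, a i) / B := by
    rw [sum_div]
    refine sum_congr rfl fun i hi ↦ ?_
    field_simp [(hb i hi).ne']
  have hweighted : ∑ i ∈ s, b i / B * (a i / b i * log (a i / b i)) =
      (∑ i ∈ s, a i * log (a i / b i)) / B := by
    rw [sum_div]
    refine sum_congr rfl fun i hi ↦ ?_
    field_simp [(hb i hi).ne']
  rw [hmean, hweighted] at jensen
  calc (∑ i ∈ s, a i) * log ((∑ i ∈ s, a i) / B)
      = B * ((∑ i ∈ s, a i) / B * log ((∑ i ∈ s, a i) / B)) := by field_simp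
    _ ≤ B * ((∑ i ∈ s, a i * log (a i / b i)) / B) := by gcongr
    _ = ∑ i ∈ s, a i * log (a i / b i) := by field_simp

theorem mul_binaryKL_div_eq {p q c : ℝ} (hp : p ≠ 0) :
    p * binaryKL (c / p) q = c * log (c / (p * q)) + (p - c) * log ((p - c) / (p * (1 - q))) := by
  have hcp : p * (c / p) = c := by field_simp
  have hrest : p * (1 - c / p) = p - c := by field_simp
  rw [binaryKL, mul_add, ← mul_assoc, hcp, ← mul_assoc, hrest, div_div, one_sub_div hp, div_div]

theorem mul_binaryKL_le_sum_mul_log_div {ι : Type*} [Fintype ι] (a q : ι → ℝ)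
    (ha : ∀ j, 0 ≤ a j) (hq : ∀ j, 0 < q j) (hq1 : ∑ j, q j = 1) (hP : 0 < ∑ j, a j) (i : ι) :
    (∑ j, a j) * binaryKL (a i / ∑ j, a j) (q i) ≤
      ∑ j, a j * log (a j / ((∑ k, a k) * q j)) := by
  classical
  set P := ∑ j, a j with hPdef
  have hrest_a : ∑ j ∈ univ.erase i, a j = P - a i := by
    rw [hPdef, ← add_sum_erase _ _ (mem_univ i), add_sub_cancel_left]
  have hrest_q : ∑ j ∈ univ.erase i, P * q j = P * (1 - q i) := by
    rw [← mul_sum, ← hq1, ← add_sum_erase _ _ (mem_univ i), add_sub_cancel_left]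
  have logsum := Real.sum_mul_log_div_sum_le (univ.erase i) a (fun j ↦ P * q j)
    (fun j _ ↦ ha j) (fun j _ ↦ mul_pos hP (hq j))
  rw [hrest_a, hrest_q] at logsum
  rw [mul_binaryKL_div_eq hP.ne', ← add_sum_erase _ _ (mem_univ i)]
  exact add_le_add_right logsum _

theorem weighted_binary_kl_le_mutual_information_general {K : ℕ}
    (J : Fin K → Fin K → ℝ)
    (hJ0 : ∀ i j, 0 ≤ J i j) (hJ1 : ∑ i, ∑ j, J i j = 1)
    (p : Fin K → ℝ) (hp : ∀ i, p i = ∑ j, J i j)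
    (hpos : ∀ i, 0 < p i ∧ p i < 1)
    (pii : Fin K → ℝ) (hpii : ∀ i, pii i = J i i / p i)
    (d : ℝ → ℝ → ℝ)
    (hd : ∀ a b, d a b =
      a * Real.log (a / b) + (1 - a) * Real.log ((1 - a) / (1 - b))) :
    ∑ i, p i * d (pii i) (p i) ≤
      ∑ i, ∑ j, J i j * Real.log (J i j / (p i * p j)) := by
  have hd' : d = binaryKL := funext₂ hd
  have hp1 : ∑ j, p j = 1 := by simp_rw [hp]; exact hJ1
  refine sum_le_sum fun i _ ↦ ?_
  have row := mul_binaryKL_le_sum_mul_log_div (J i) p (hJ0 i) (fun j ↦ (hpos j).1) hp1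
    ((hp i) ▸ (hpos i).1) i
  rw [← hp i] at row
  rwa [hd', hpii]

/-- Let `{Y_t}` be a stationary process on `Fin K` with joint law
`J i j = P(Y_{t-1} = i, Y_t = j)`, stationary distribution `p i = ∑_j J i j`
(with `0 < p i < 1`), and self-transition probabilities `pii i = J i i / p i`.
With `d` the binary KL divergence, `∑_i p i * d (pii i) (p i) ≤ I(Y_t; Y_{t-1})`. -/
theorem weighted_binary_kl_le_mutual_information {K : ℕ}
    (J : Fin K → Fin K → ℝ)
    (hJ0 : ∀ i j, 0 ≤ J i j) (hJ1 : ∑ i, ∑ j, J i j = 1)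
    (p : Fin K → ℝ) (hp : ∀ i, p i = ∑ j, J i j)
    (hstat : ∀ i, ∑ j, J i j = ∑ j, J j i)
    (hpos : ∀ i, 0 < p i ∧ p i < 1)
    (pii : Fin K → ℝ) (hpii : ∀ i, pii i = J i i / p i)
    (d : ℝ → ℝ → ℝ)
    (hd : ∀ a b, d a b =
      a * Real.log (a / b) + (1 - a) * Real.log ((1 - a) / (1 - b))) :
    ∑ i, p i * d (pii i) (p i) ≤
      ∑ i, ∑ j, J i j * Real.log (J i j / (p i * p j)) :=
  weighted_binary_kl_le_mutual_information_general J hJ0 hJ1 p hp hpos pii hpii d hd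
end

section
/- For the random walk on a disjoint union of cliques with ground-truth partition Y^true and invariant node distribution induced by a cluster distribution p•, the Synwalk objective J(Y^true) = ∑_i p_i d(p_{i→i} || p_i) evaluated at the ground-truth partition equals H(Y•) = I(X_t; X_{t-1}), i.e., the ground-truth partition attains the global upper bound of the objective. -/
/-- For the random walk on a disjoint union of cliques with ground-truth
partition `m : X → Fin K` and invariant node distribution induced by a (positive)
cluster distribution `pc`, the Synwalk objective
`J(Y^true) = ∑_i p_i * d(p_{i→i} ‖ p_i)` at the ground-truth partition equals
`H(Y•) = I(X_t; X_{t-1})`, i.e., the ground truth attains the global upper bound. -/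
theorem clique_walk_objective_attains_bound {X : Type*} [Fintype X] {K : ℕ}
    (m : X → Fin K) (hm : Function.Surjective m)
    (n : Fin K → ℕ)
    (hn : ∀ i, n i = (Finset.univ.filter (fun x => m x = i)).card)
    (pc : Fin K → ℝ) (hpcpos : ∀ i, 0 < pc i) (hpc1 : ∑ i, pc i = 1)
    (p : X → ℝ) (hp : ∀ α, p α = pc (m α) / (n (m α) : ℝ))
    (P : X → X → ℝ)
    (hP : ∀ α β, P α β = if m β = m α then (1 : ℝ) / (n (m α) : ℝ) else 0)
    (pclust : Fin K → ℝ)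
    (hpclust : ∀ i, pclust i = ∑ α ∈ Finset.univ.filter (fun α => m α = i), p α)
    (pii : Fin K → ℝ)
    (hpii : ∀ i, pii i =
      (∑ α ∈ Finset.univ.filter (fun α => m α = i),
        ∑ β ∈ Finset.univ.filter (fun β => m β = i), p α * P α β) / pclust i)
    (d : ℝ → ℝ → ℝ)
    (hd : ∀ a b, d a b =
      a * Real.log (a / b) + (1 - a) * Real.log ((1 - a) / (1 - b))) :
    (∑ i, pclust i * d (pii i) (pclust i) = -∑ i, pc i * Real.log (pc i)) ∧
    (-∑ i, pc i * Real.log (pc i) =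
      ∑ α, ∑ β, (p α * P α β) * Real.log ((p α * P α β) / (p α * p β))) := by

  -- n i is positive
  have hnpos : ∀ i, 0 < n i := by
    intro i
    rw [hn i]
    obtain ⟨x, hx⟩ := hm i
    exact Finset.card_pos.mpr ⟨x, by simp [hx]⟩
  have hnne : ∀ i, (n i : ℝ) ≠ 0 := fun i => Nat.cast_ne_zero.mpr (hnpos i).ne'
  have hpcne : ∀ i, pc i ≠ 0 := fun i => (hpcpos i).ne'
  -- pclust = pc
  have hpcl : ∀ i, pclust i = pc i := by
    intro i
    rw [hpclust i]
    have : ∀ α ∈ Finset.univ.filter (fun α => m α = i), p α = pc i / (n i : ℝ) := by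
      intro α hα
      simp only [Finset.mem_filter] at hα
      rw [hp α, hα.2]
    rw [Finset.sum_congr rfl this, Finset.sum_const, ← hn i, nsmul_eq_mul,
      mul_div_assoc', mul_comm, mul_div_assoc, div_self (hnne i), mul_one]
  -- pii = 1
  have hpii1 : ∀ i, pii i = 1 := by
    intro i
    rw [hpii i, hpcl i]
    have hin : ∀ α ∈ Finset.univ.filter (fun α => m α = i),
        ∑ β ∈ Finset.univ.filter (fun β => m β = i), p α * P α β = pc i / (n i : ℝ) := by
      intro α hα
      simp only [Finset.mem_filter] at hα
      have : ∀ β ∈ Finset.univ.filter (fun β => m β = i),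
          p α * P α β = (pc i / (n i : ℝ)) * (1 / (n i : ℝ)) := by
        intro β hβ
        simp only [Finset.mem_filter] at hβ
        rw [hp α, hP α β, hα.2, if_pos hβ.2]
      rw [Finset.sum_congr rfl this, Finset.sum_const, ← hn i, nsmul_eq_mul]
      rw [show ((n i : ℝ)) * (pc i / (n i:ℝ) * (1/(n i:ℝ))) = (n i:ℝ) * pc i / ((n i:ℝ) * (n i:ℝ)) by ring,
        mul_div_mul_left _ _ (hnne i)]
    rw [Finset.sum_congr rfl hin, Finset.sum_const, ← hn i, nsmul_eq_mul,
      mul_div_assoc', mul_comm, mul_div_assoc, div_self (hnne i), mul_one, div_self (hpcne i)]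
  have hfirst : ∑ i, pclust i * d (pii i) (pclust i) = -∑ i, pc i * Real.log (pc i) := by
    rw [← Finset.sum_neg_distrib]
    apply Finset.sum_congr rfl
    intro i _
    rw [hpcl i, hpii1 i, hd]
    simp [one_div, Real.log_inv]
  refine ⟨hfirst, ?_⟩
  -- second part
  have key : ∀ α β, (p α * P α β) * Real.log ((p α * P α β) / (p α * p β)) =
      if m β = m α then (pc (m α) / ((n (m α) : ℝ))^2) * (-Real.log (pc (m α))) else 0 := by
    intro α β
    by_cases h : m β = m α
    · rw [if_pos h, hp α, hp β, hP α β, if_pos h, h]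
      have h1 := hpcne (m α); have h2 := hnne (m α)
      have harg : (pc (m α) / (n (m α) : ℝ) * (1 / (n (m α) : ℝ))) /
          ((pc (m α) / (n (m α) : ℝ)) * (pc (m α) / (n (m α) : ℝ))) = (pc (m α))⁻¹ := by
        field_simp
      rw [harg, Real.log_inv]
      ring
    · rw [if_neg h, hP α β, if_neg h]
      simp
  have hβsum : ∀ α, (∑ β, (p α * P α β) * Real.log ((p α * P α β) / (p α * p β))) =
      (pc (m α) / (n (m α) : ℝ)) * (-Real.log (pc (m α))) := by
    intro α
    simp only [key]
    rw [← Finset.sum_filter, Finset.sum_const, ← hn (m α), nsmul_eq_mul]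
    have h2 := hnne (m α)
    field_simp
  rw [Finset.sum_congr rfl (fun α _ => hβsum α)]
  rw [← Finset.sum_fiberwise Finset.univ m (fun α => (pc (m α) / (n (m α) : ℝ)) * (-Real.log (pc (m α))))]
  rw [← Finset.sum_neg_distrib]
  apply Finset.sum_congr rfl
  intro i _
  have : ∀ α ∈ Finset.univ.filter (fun α => m α = i),
      (pc (m α) / (n (m α) : ℝ)) * (-Real.log (pc (m α))) =
      (pc i / (n i : ℝ)) * (-Real.log (pc i)) := by
    intro α hα
    simp only [Finset.mem_filter] at hα
    rw [hα.2]
  rw [Finset.sum_congr rfl this, Finset.sum_const, ← hn i, nsmul_eq_mul]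
  have h2 := hnne i
  field_simp
end

section
/- Let Ỹ be a strict coarsening of the ground-truth partition of a disjoint union of cliques (each clique having positive stationary probability). Then the Synwalk objective satisfies J(Ỹ) = H(Ỹ) < H(Y•) = J(Y^true); that is, coarsening the true partition strictly decreases the objective even though all self-transition probabilities remain 1. -/
/-- Let `Ỹ` (given by the coarsening map `f : Fin K → Fin M`, `M < K`,
surjective) be a strict coarsening of the ground-truth partition `m : X → Fin K` of a
disjoint union of cliques, each clique having positive stationary probability. Then the
Synwalk objective satisfies `J(Ỹ) = H(Ỹ) < H(Y•) = J(Y^true)`: coarsening the true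
partition strictly decreases the objective although all self-transition probabilities
remain 1. -/
theorem coarsening_decreases_objective {X : Type*} [Fintype X] {K M : ℕ}
    (hKM : M < K)
    (m : X → Fin K) (hm : Function.Surjective m)
    (f : Fin K → Fin M) (hf : Function.Surjective f)
    (n : Fin K → ℕ)
    (hn : ∀ i, n i = (Finset.univ.filter (fun x => m x = i)).card)
    (pc : Fin K → ℝ) (hpcpos : ∀ i, 0 < pc i) (hpc1 : ∑ i, pc i = 1)
    (p : X → ℝ) (hp : ∀ α, p α = pc (m α) / (n (m α) : ℝ))
    (P : X → X → ℝ)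
    (hP : ∀ α β, P α β = if m β = m α then (1 : ℝ) / (n (m α) : ℝ) else 0)
    (d : ℝ → ℝ → ℝ)
    (hd : ∀ a b, d a b =
      a * Real.log (a / b) + (1 - a) * Real.log ((1 - a) / (1 - b)))
    -- cluster probabilities and self-transition probabilities of the true partition
    (pclust : Fin K → ℝ)
    (hpclust : ∀ i, pclust i = ∑ α ∈ Finset.univ.filter (fun α => m α = i), p α)
    (pii : Fin K → ℝ)
    (hpii : ∀ i, pii i =
      (∑ α ∈ Finset.univ.filter (fun α => m α = i),
        ∑ β ∈ Finset.univ.filter (fun β => m β = i), p α * P α β) / pclust i)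
    -- cluster probabilities and self-transition probabilities of the coarsening
    (pt : Fin M → ℝ)
    (hpt : ∀ j, pt j = ∑ α ∈ Finset.univ.filter (fun α => f (m α) = j), p α)
    (ptii : Fin M → ℝ)
    (hptii : ∀ j, ptii j =
      (∑ α ∈ Finset.univ.filter (fun α => f (m α) = j),
        ∑ β ∈ Finset.univ.filter (fun β => f (m β) = j), p α * P α β) / pt j) :
    (∑ j, pt j * d (ptii j) (pt j) = -∑ j, pt j * Real.log (pt j)) ∧
    (-∑ j, pt j * Real.log (pt j) < -∑ i, pc i * Real.log (pc i)) ∧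
    (-∑ i, pc i * Real.log (pc i) = ∑ i, pclust i * d (pii i) (pclust i)) := by
  classical
  have hnpos : ∀ i, 0 < n i := by
    intro i; rw [hn]
    obtain ⟨x, hx⟩ := hm i
    exact Finset.card_pos.mpr ⟨x, by simp [hx]⟩
  have hnne : ∀ i, (n i : ℝ) ≠ 0 := fun i => Nat.cast_ne_zero.mpr (hnpos i).ne'
  have hpclust' : ∀ i, pclust i = pc i := by
    intro i
    rw [hpclust]
    have hc : ∀ α ∈ Finset.univ.filter (fun α => m α = i),
        p α = pc i / (n i : ℝ) := by
      intro α hα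
      simp only [Finset.mem_filter] at hα
      rw [hp, hα.2]
    rw [Finset.sum_congr rfl hc, Finset.sum_const, ← hn i, nsmul_eq_mul,
      mul_comm]
    exact div_mul_cancel₀ _ (hnne i)
  have hgroup : ∀ (g : X → ℝ) (j : Fin M),
      ∑ α ∈ Finset.univ.filter (fun α => f (m α) = j), g α
      = ∑ i ∈ Finset.univ.filter (fun i => f i = j),
          ∑ α ∈ Finset.univ.filter (fun α => m α = i), g α := by
    intro g j
    rw [Finset.sum_fiberwise_eq_sum_filter]
    apply Finset.sum_congr _ (fun _ _ => rfl)
    ext α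
    simp
  have hpt' : ∀ j, pt j = ∑ i ∈ Finset.univ.filter (fun i => f i = j), pc i := by
    intro j
    rw [hpt, hgroup]
    exact Finset.sum_congr rfl (fun i _ => by rw [← hpclust' i, hpclust])
  have hptpos : ∀ j, 0 < pt j := by
    intro j
    rw [hpt']
    obtain ⟨i, hi⟩ := hf j
    exact Finset.sum_pos (fun i _ => hpcpos i) ⟨i, by simp [hi]⟩
  have hrow : ∀ α, ∑ β ∈ Finset.univ.filter (fun β => m β = m α), P α β = 1 := by
    intro α
    have hc : ∀ β ∈ Finset.univ.filter (fun β => m β = m α),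
        P α β = 1 / (n (m α) : ℝ) := by
      intro β hβ; simp only [Finset.mem_filter] at hβ; rw [hP, if_pos hβ.2]
    rw [Finset.sum_congr rfl hc, Finset.sum_const, ← hn, nsmul_eq_mul,
      mul_one_div, div_self (hnne (m α))]
  have hpii1 : ∀ i, pii i = 1 := by
    intro i
    rw [hpii]
    have hnum : ∑ α ∈ Finset.univ.filter (fun α => m α = i),
        ∑ β ∈ Finset.univ.filter (fun β => m β = i), p α * P α β = pclust i := by
      rw [hpclust]
      refine Finset.sum_congr rfl fun α hα => ?_
      simp only [Finset.mem_filter] at hα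
      have h1 := hrow α
      rw [hα.2] at h1
      rw [← Finset.mul_sum, h1, mul_one]
    rw [hnum, hpclust' i]
    exact div_self (hpcpos i).ne'
  have hrow2 : ∀ (j : Fin M) (α : X), f (m α) = j →
      ∑ β ∈ Finset.univ.filter (fun β => f (m β) = j), P α β = 1 := by
    intro j α hα
    rw [← hrow α]
    refine (Finset.sum_subset ?_ ?_).symm
    · intro β hβ
      simp only [Finset.mem_filter, Finset.mem_univ, true_and] at *
      rw [hβ, hα]
    · intro β _ hβ2
      rw [hP, if_neg]
      intro h
      exact hβ2 (by simp [h])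
  have hptii1 : ∀ j, ptii j = 1 := by
    intro j
    rw [hptii]
    have hnum : ∑ α ∈ Finset.univ.filter (fun α => f (m α) = j),
        ∑ β ∈ Finset.univ.filter (fun β => f (m β) = j), p α * P α β = pt j := by
      rw [hpt]
      refine Finset.sum_congr rfl fun α hα => ?_
      simp only [Finset.mem_filter] at hα
      rw [← Finset.mul_sum, hrow2 j α hα.2, mul_one]
    rw [hnum]
    field_simp [(hptpos j).ne']
  have hd1 : ∀ b : ℝ, d 1 b = -Real.log b := by
    intro b
    rw [hd]
    norm_num [one_div, Real.log_inv]
  have part1 : ∑ j, pt j * d (ptii j) (pt j) = -∑ j, pt j * Real.log (pt j) := by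
    rw [← Finset.sum_neg_distrib]
    exact Finset.sum_congr rfl fun j _ => by rw [hptii1, hd1, mul_neg]
  have part3 : -∑ i, pc i * Real.log (pc i)
      = ∑ i, pclust i * d (pii i) (pclust i) := by
    rw [← Finset.sum_neg_distrib]
    exact Finset.sum_congr rfl fun i _ => by
      rw [hpii1, hd1, hpclust', mul_neg]
  have key : ∑ i, pc i * Real.log (pc i) < ∑ j, pt j * Real.log (pt j) := by
    have hrhs : ∑ j, pt j * Real.log (pt j)
        = ∑ i, pc i * Real.log (pt (f i)) := by
      rw [← Finset.sum_fiberwise Finset.univ f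
        (fun i => pc i * Real.log (pt (f i)))]
      refine Finset.sum_congr rfl fun j _ => ?_
      calc pt j * Real.log (pt j)
          = ∑ i ∈ Finset.univ.filter (fun i => f i = j),
              pc i * Real.log (pt j) := by rw [← Finset.sum_mul, ← hpt' j]
        _ = ∑ i ∈ Finset.univ.filter (fun i => f i = j),
              pc i * Real.log (pt (f i)) := by
            refine Finset.sum_congr rfl fun i hi => ?_
            simp only [Finset.mem_filter] at hi
            rw [hi.2]
    rw [hrhs]
    apply Finset.sum_lt_sum
    · intro i _
      have h1 : pc i ≤ pt (f i) := by
        rw [hpt']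
        exact Finset.single_le_sum (fun i _ => (hpcpos i).le) (by simp)
      exact mul_le_mul_of_nonneg_left (Real.log_le_log (hpcpos i) h1) (hpcpos i).le
    · obtain ⟨a, b, hab, hfab⟩ :=
        Fintype.exists_ne_map_eq_of_card_lt f (by simpa using hKM)
      refine ⟨a, Finset.mem_univ a, ?_⟩
      have hlt : pc a < pt (f a) := by
        rw [hpt']
        have ha : a ∈ Finset.univ.filter (fun i => f i = f a) := by simp
        rw [← Finset.add_sum_erase _ _ ha]
        refine lt_add_of_pos_right _ (Finset.sum_pos' (fun i _ => (hpcpos i).le)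
          ⟨b, ?_, hpcpos b⟩)
        simp [Finset.mem_erase, hab.symm, hfab.symm]
      exact mul_lt_mul_of_pos_left (Real.log_lt_log (hpcpos a) hlt) (hpcpos a)
  exact ⟨part1, neg_lt_neg key, part3⟩
end

section
/- Let p and q be joint distributions on X × X where q has the block-structured form: q(α,β) = p_X(α)·[ 1_{m(β)=m(α)} r_β^{m(β)} (1−s_{m(α)}) + 1_{m(β)≠m(α)} r_β^{m(β)} s_{m(α)} u_{m(β)}/(1−u_{m(α)}) ]. Then the relative entropy rate D(P||Q) = ∑_{α,β} p_X(α) p(β|α) log( p(β|α)/q(β|α) ) decomposes as the sum of three terms: (i) ∑_j p_j D( within-cluster-j conditional distributions || r^j ), (ii) a cross-cluster term depending only on u, and (iii) ∑_i D over nodes α∈Y_i of Bernoulli divergences between stay-probabilities p(α→i) and 1−s_i, and each term can be minimized independently over r, u, s respectively. -/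
/-- Decomposition of the relative entropy rate `D(P‖Q)` for a
block-structured transition matrix
`q α β = 1_{m β = m α} · r β (1 - s (m α)) + 1_{m β ≠ m α} · r β s (m α) u (m β)/(1 - u (m α))`.
With `paj α j = ∑_{β ∈ Y_j} P α β` the transition probability from `α` into cluster `j`,
`D(P‖Q) = ∑_{α,β} pX α P α β log (P α β / q α β)` splits into three non-interacting
terms: (i) a within-cluster term depending only on `r`, (ii) a cross-cluster term
depending only on `u`, and (iii) a sum of Bernoulli divergences between the stay
probabilities `paj α i` and `1 - s i`, depending only on `s`; each term can therefore
be minimized independently over `r`, `u`, `s` respectively. -/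
theorem relative_entropy_rate_decomposition {X : Type*} [Fintype X] {K : ℕ}
    (m : X → Fin K)
    (pX : X → ℝ) (hpX0 : ∀ α, 0 < pX α) (hpX1 : ∑ α, pX α = 1)
    (P : X → X → ℝ) (hPpos : ∀ α β, 0 < P α β) (hProw : ∀ α, ∑ β, P α β = 1)
    (r : X → ℝ) (hr0 : ∀ β, 0 < r β)
    (hr1 : ∀ i, ∑ β ∈ Finset.univ.filter (fun β => m β = i), r β = 1)
    (s : Fin K → ℝ) (hs : ∀ i, 0 < s i ∧ s i < 1)
    (u : Fin K → ℝ) (hu : ∀ i, 0 < u i ∧ u i < 1) (hu1 : ∑ i, u i = 1)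
    (paj : X → Fin K → ℝ)
    (hpaj : ∀ α j, paj α j = ∑ β ∈ Finset.univ.filter (fun β => m β = j), P α β)
    (q : X → X → ℝ)
    (hq : ∀ α β, q α β = if m β = m α then r β * (1 - s (m α))
      else r β * s (m α) * u (m β) / (1 - u (m α))) :
    ∑ α, ∑ β, pX α * P α β * Real.log (P α β / q α β) =
      (∑ j, ∑ α, ∑ β ∈ Finset.univ.filter (fun β => m β = j),
        pX α * P α β * Real.log ((P α β / paj α j) / r β))
      + (∑ i, ∑ j ∈ Finset.univ.filter (fun j => j ≠ i),
          ∑ α ∈ Finset.univ.filter (fun α => m α = i),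
            pX α * paj α j *
              Real.log ((paj α j / (1 - paj α i)) / (u j / (1 - u i))))
      + (∑ i, ∑ α ∈ Finset.univ.filter (fun α => m α = i),
          (pX α * paj α i * Real.log (paj α i / (1 - s i)) +
            pX α * (1 - paj α i) * Real.log ((1 - paj α i) / s i))) := by
  classical
  rcases isEmpty_or_nonempty X with hX | hX
  · simp
  -- each cluster is nonempty
  have hYne : ∀ j : Fin K, (Finset.univ.filter (fun β => m β = j)).Nonempty := by
    intro j
    by_contra h
    rw [Finset.not_nonempty_iff_eq_empty] at h
    have := hr1 j
    rw [h, Finset.sum_empty] at this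
    norm_num at this
  have hpaj_pos : ∀ α j, 0 < paj α j := by
    intro α j
    rw [hpaj]
    exact Finset.sum_pos (fun β _ => hPpos α β) (hYne j)
  -- K ≥ 2
  have hK2 : 2 ≤ K := by
    obtain ⟨α0⟩ := hX
    have hK1 : 1 ≤ K := (m α0).pos
    by_contra h
    have hK : K = 1 := by omega
    subst hK
    have : u 0 = 1 := by simpa using hu1
    have := (hu 0).2
    linarith
  have herase : ∀ i : Fin K, (Finset.univ.erase i).Nonempty := by
    intro i
    rw [← Finset.card_pos, Finset.card_erase_of_mem (Finset.mem_univ i)]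
    simp only [Finset.card_univ, Fintype.card_fin]
    omega
  have hpaj_sum : ∀ α, ∑ j, paj α j = 1 := by
    intro α
    calc ∑ j, paj α j = ∑ j, ∑ β ∈ Finset.univ.filter (fun β => m β = j), P α β :=
          Finset.sum_congr rfl fun j _ => hpaj α j
      _ = ∑ β, P α β := Finset.sum_fiberwise _ _ _
      _ = 1 := hProw α
  have h1m : ∀ α (i : Fin K), 1 - paj α i = ∑ j ∈ Finset.univ.erase i, paj α j := by
    intro α i
    have := hpaj_sum α
    rw [← Finset.add_sum_erase _ _ (Finset.mem_univ i)] at this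
    linarith
  have h1m_pos : ∀ α (i : Fin K), 0 < 1 - paj α i := by
    intro α i
    rw [h1m]
    exact Finset.sum_pos (fun j _ => hpaj_pos α j) (herase i)
  -- rewrite each term of the RHS as a single sum over α
  have hT1 : (∑ j, ∑ α, ∑ β ∈ Finset.univ.filter (fun β => m β = j),
        pX α * P α β * Real.log ((P α β / paj α j) / r β))
      = ∑ α, ∑ j, ∑ β ∈ Finset.univ.filter (fun β => m β = j),
        pX α * P α β * Real.log ((P α β / paj α j) / r β) := Finset.sum_comm
  have hT2 : (∑ i, ∑ j ∈ Finset.univ.filter (fun j => j ≠ i),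
          ∑ α ∈ Finset.univ.filter (fun α => m α = i),
            pX α * paj α j *
              Real.log ((paj α j / (1 - paj α i)) / (u j / (1 - u i))))
      = ∑ α, ∑ j ∈ Finset.univ.erase (m α),
          pX α * paj α j *
            Real.log ((paj α j / (1 - paj α (m α))) / (u j / (1 - u (m α)))) := by
    rw [← Finset.sum_fiberwise Finset.univ m
      (fun α => ∑ j ∈ Finset.univ.erase (m α),
          pX α * paj α j *
            Real.log ((paj α j / (1 - paj α (m α))) / (u j / (1 - u (m α)))))]
    refine Finset.sum_congr rfl fun i _ => ?_
    rw [Finset.sum_comm]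
    refine Finset.sum_congr rfl fun α hα => ?_
    rw [Finset.mem_filter] at hα
    rw [Finset.filter_ne', hα.2]
  have hT3 : (∑ i, ∑ α ∈ Finset.univ.filter (fun α => m α = i),
          (pX α * paj α i * Real.log (paj α i / (1 - s i)) +
            pX α * (1 - paj α i) * Real.log ((1 - paj α i) / s i)))
      = ∑ α, (pX α * paj α (m α) * Real.log (paj α (m α) / (1 - s (m α))) +
            pX α * (1 - paj α (m α)) * Real.log ((1 - paj α (m α)) / s (m α))) := by
    rw [← Finset.sum_fiberwise Finset.univ m
      (fun α => pX α * paj α (m α) * Real.log (paj α (m α) / (1 - s (m α))) +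
            pX α * (1 - paj α (m α)) * Real.log ((1 - paj α (m α)) / s (m α)))]
    refine Finset.sum_congr rfl fun i _ => Finset.sum_congr rfl fun α hα => ?_
    rw [Finset.mem_filter] at hα
    rw [hα.2]
  rw [hT1, hT2, hT3, ← Finset.sum_add_distrib, ← Finset.sum_add_distrib]
  refine Finset.sum_congr rfl fun α _ => ?_
  -- per-α identity
  set i := m α with hi
  have hsi0 := (hs i).1
  have hsi1 := (hs i).2
  have hui0 := (hu i).1
  have hui1 := (hu i).2
  have hcollapse : ∀ (j : Fin K) (c : ℝ),
      ∑ β ∈ Finset.univ.filter (fun β => m β = j), pX α * P α β * c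
        = pX α * paj α j * c := by
    intro j c
    calc ∑ β ∈ Finset.univ.filter (fun β => m β = j), pX α * P α β * c
        = ∑ β ∈ Finset.univ.filter (fun β => m β = j), P α β * (pX α * c) :=
          Finset.sum_congr rfl fun β _ => by ring
      _ = (∑ β ∈ Finset.univ.filter (fun β => m β = j), P α β) * (pX α * c) :=
          (Finset.sum_mul _ _ _).symm
      _ = paj α j * (pX α * c) := by rw [← hpaj]
      _ = pX α * paj α j * c := by ring
  -- split LHS over clusters
  rw [← Finset.sum_fiberwise Finset.univ m (fun β => pX α * P α β * Real.log (P α β / q α β))]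
  -- per-cluster identities
  have hstay : ∑ β ∈ Finset.univ.filter (fun β => m β = i),
      pX α * P α β * Real.log (P α β / q α β)
      = (∑ β ∈ Finset.univ.filter (fun β => m β = i),
          pX α * P α β * Real.log ((P α β / paj α i) / r β))
        + pX α * paj α i * Real.log (paj α i / (1 - s i)) := by
    have key : ∀ β ∈ Finset.univ.filter (fun β => m β = i),
        pX α * P α β * Real.log (P α β / q α β)
          = pX α * P α β * Real.log ((P α β / paj α i) / r β)
            + pX α * P α β * Real.log (paj α i / (1 - s i)) := by
      intro β hβ
      rw [Finset.mem_filter] at hβ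
      rw [hq, hβ.2, if_pos rfl]
      have hr' : r β ≠ 0 := ne_of_gt (hr0 β)
      have hp' : paj α i ≠ 0 := ne_of_gt (hpaj_pos α i)
      have hs' : (1 : ℝ) - s i ≠ 0 := by linarith
      have h1 : P α β / (r β * (1 - s i)) =
          ((P α β / paj α i) / r β) * (paj α i / (1 - s i)) := by
        field_simp
      have hx1 : 0 < (P α β / paj α i) / r β :=
        div_pos (div_pos (hPpos α β) (hpaj_pos α i)) (hr0 β)
      have hx2 : 0 < paj α i / (1 - s i) := div_pos (hpaj_pos α i) (by linarith)
      rw [h1, Real.log_mul (ne_of_gt hx1) (ne_of_gt hx2)]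
      ring
    rw [Finset.sum_congr rfl key, Finset.sum_add_distrib, hcollapse]
  have hcross : ∀ j ∈ Finset.univ.erase i,
      ∑ β ∈ Finset.univ.filter (fun β => m β = j),
        pX α * P α β * Real.log (P α β / q α β)
      = (∑ β ∈ Finset.univ.filter (fun β => m β = j),
          pX α * P α β * Real.log ((P α β / paj α j) / r β))
        + pX α * paj α j * Real.log ((paj α j / (1 - paj α i)) / (u j / (1 - u i)))
        + pX α * paj α j * Real.log ((1 - paj α i) / s i) := by
    intro j hj
    have hji : j ≠ i := (Finset.mem_erase.mp hj).1
    have huj0 := (hu j).1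
    have key : ∀ β ∈ Finset.univ.filter (fun β => m β = j),
        pX α * P α β * Real.log (P α β / q α β)
          = pX α * P α β * Real.log ((P α β / paj α j) / r β)
            + (pX α * P α β *
                Real.log ((paj α j / (1 - paj α i)) / (u j / (1 - u i)))
              + pX α * P α β * Real.log ((1 - paj α i) / s i)) := by
      intro β hβ
      rw [Finset.mem_filter] at hβ
      rw [hq, hβ.2, if_neg hji]
      have hr' : r β ≠ 0 := ne_of_gt (hr0 β)
      have hpj' : paj α j ≠ 0 := ne_of_gt (hpaj_pos α j)
      have hpi' : (1 : ℝ) - paj α i ≠ 0 := ne_of_gt (h1m_pos α i)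
      have hs' : s i ≠ 0 := ne_of_gt hsi0
      have hu' : u j ≠ 0 := ne_of_gt huj0
      have hui' : (1 : ℝ) - u i ≠ 0 := by linarith
      have h1 : P α β / (r β * s i * u j / (1 - u i)) =
          ((P α β / paj α j) / r β) *
            (((paj α j / (1 - paj α i)) / (u j / (1 - u i))) *
              ((1 - paj α i) / s i)) := by
        field_simp
      have hx1 : 0 < (P α β / paj α j) / r β :=
        div_pos (div_pos (hPpos α β) (hpaj_pos α j)) (hr0 β)
      have hx2 : 0 < (paj α j / (1 - paj α i)) / (u j / (1 - u i)) :=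
        div_pos (div_pos (hpaj_pos α j) (h1m_pos α i))
          (div_pos huj0 (by linarith))
      have hx3 : 0 < (1 - paj α i) / s i := div_pos (h1m_pos α i) hsi0
      rw [h1, Real.log_mul (ne_of_gt hx1) (ne_of_gt (mul_pos hx2 hx3)),
        Real.log_mul (ne_of_gt hx2) (ne_of_gt hx3)]
      ring
    rw [Finset.sum_congr rfl key, Finset.sum_add_distrib, Finset.sum_add_distrib,
      hcollapse, hcollapse, add_assoc]
  -- assemble
  rw [← Finset.add_sum_erase Finset.univ
      (fun j => ∑ β ∈ Finset.univ.filter (fun β => m β = j),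
        pX α * P α β * Real.log (P α β / q α β)) (Finset.mem_univ i),
    ← Finset.add_sum_erase Finset.univ
      (fun j => ∑ β ∈ Finset.univ.filter (fun β => m β = j),
        pX α * P α β * Real.log ((P α β / paj α j) / r β)) (Finset.mem_univ i),
    hstay, Finset.sum_congr rfl hcross]
  have hE : ∑ j ∈ Finset.univ.erase i, pX α * paj α j * Real.log ((1 - paj α i) / s i)
      = pX α * (1 - paj α i) * Real.log ((1 - paj α i) / s i) := by
    calc ∑ j ∈ Finset.univ.erase i, pX α * paj α j * Real.log ((1 - paj α i) / s i)
        = ∑ j ∈ Finset.univ.erase i, paj α j * (pX α * Real.log ((1 - paj α i) / s i)) :=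
          Finset.sum_congr rfl fun j _ => by ring
      _ = (∑ j ∈ Finset.univ.erase i, paj α j) * (pX α * Real.log ((1 - paj α i) / s i)) :=
          (Finset.sum_mul _ _ _).symm
      _ = (1 - paj α i) * (pX α * Real.log ((1 - paj α i) / s i)) := by rw [← h1m]
      _ = pX α * (1 - paj α i) * Real.log ((1 - paj α i) / s i) := by ring
  rw [Finset.sum_add_distrib, Finset.sum_add_distrib, hE]
  ring
end

section
/- Let {X_t} be a stationary Markov chain on finite X and Y_t = m(X_t) for a partition map m. With optimal within-cluster parameters r and staying parameters s, and the relaxed per-origin cluster distributions u_j^i = p_{i→j}/p_{i↛i} for j≠i (and u_i^i = 0), the minimum of the relaxed relative entropy rate equals I(X_t;X_{t-1}) − I(Y_t;Y_{t-1}). Consequently, since the non-relaxed minimum (with a single distribution u) is at least the relaxed minimum, I(X_t;X_{t-1}) − I(Y_t;Y_{t-1}) ≤ min over the original parameter set of D(P||Q^Y). -/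
/-!
Every model kernel factors as `Q(α → β) = r β * w (m α) (m β)`, and for such a kernel the chain
rule splits the relative entropy rate as
`D(P‖Q) = I(X_t;X_{t-1}) - I(Y_t;Y_{t-1}) + D(p_X ‖ p_{m β} r_β) + ∑ᵢ p_i D(p_{i→·} ‖ w_{i·})`
(the last sum written unnormalised, with the lumped joint law `J i j = p_i p_{i→j}`).
The relaxed optimum realises `r β = p_X β / p_{m β}` and `w i j = p_{i→j}`, where both divergences
vanish. When `r` sums to one on each cluster and `w` is row-stochastic, as for every non-relaxed
parameter `(r, s, u)`, both compare measures of equal total mass, so Gibbs' inequality makes them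
nonnegative.
-/

open Finset Real

section Definitions

variable {X ι : Type*}

noncomputable def relEntropy [Fintype ι] (p q : ι → ℝ) : ℝ := ∑ i, p i * log (p i / q i)

noncomputable def mutualInfo [Fintype ι] (J : ι → ι → ℝ) (p : ι → ℝ) : ℝ :=
  ∑ i, ∑ j, J i j * log (J i j / (p i * p j))

noncomputable def relEntropyRate [Fintype X] (pX : X → ℝ) (P Q : X → X → ℝ) : ℝ :=
  ∑ α, ∑ β, pX α * P α β * log (P α β / Q α β)

def clusterMass [Fintype X] [DecidableEq ι] (m : X → ι) (pX : X → ℝ) (i : ι) : ℝ :=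
  ∑ α ∈ univ.filter (fun α => m α = i), pX α

def lumpedJoint [Fintype X] [DecidableEq ι] (m : X → ι) (pX : X → ℝ) (P : X → X → ℝ)
    (i j : ι) : ℝ :=
  ∑ α ∈ univ.filter (fun α => m α = i), ∑ β ∈ univ.filter (fun β => m β = j), pX α * P α β

def clusterKernel (m : X → ι) (r : X → ℝ) (w : ι → ι → ℝ) (α β : X) : ℝ := r β * w (m α) (m β)

noncomputable def relaxedJump [DecidableEq ι] (s : ι → ℝ) (u : ι → ι → ℝ) (i j : ι) : ℝ :=
  if j = i then 1 - s i else s i * u i j / (1 - u i i)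

/-- The paper's `Q^Y` with per-origin cross-cluster distributions `u i`; the non-relaxed model is
`u := fun _ => u`. -/
noncomputable def relaxedKernel [DecidableEq ι] (m : X → ι) (r : X → ℝ) (s : ι → ℝ)
    (u : ι → ι → ℝ) (α β : X) : ℝ :=
  if m β = m α then r β * (1 - s (m α))
  else r β * s (m α) * u (m α) (m β) / (1 - u (m α) (m α))

end Definitions

section Gibbs

variable {ι : Type*} [Fintype ι]

@[simp]
theorem relEntropy_self (p : ι → ℝ) : relEntropy p p = 0 := by
  refine sum_eq_zero fun i _ => ?_
  rcases eq_or_ne (p i) 0 with h | h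
  · simp [h]
  · simp [div_self h]

theorem sub_le_mul_log_div {p q : ℝ} (hp : 0 ≤ p) (hq : 0 < q) : p - q ≤ p * log (p / q) := by
  rcases hp.eq_or_lt with rfl | hp
  · simpa using hq.le
  · have := one_sub_inv_le_log_of_pos (div_pos hp hq)
    rw [inv_div] at this
    calc p - q = p * (1 - q / p) := by field_simp
      _ ≤ p * log (p / q) := mul_le_mul_of_nonneg_left this hp.le

theorem relEntropy_nonneg {p q : ι → ℝ} (hp : ∀ i, 0 ≤ p i) (hq : ∀ i, 0 < q i)
    (hpq : ∑ i, q i ≤ ∑ i, p i) : 0 ≤ relEntropy p q :=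
  calc 0 ≤ ∑ i, (p i - q i) := by rw [sum_sub_distrib]; linarith
    _ ≤ relEntropy p q := sum_le_sum fun i _ => sub_le_mul_log_div (hp i) (hq i)

end Gibbs

section Lumping

variable {X ι : Type*} [Fintype X] [DecidableEq ι] {m : X → ι} {pX : X → ℝ} {P : X → X → ℝ}

theorem clusterMass_pos (hm : Function.Surjective m) (hpX : ∀ α, 0 < pX α) (i : ι) :
    0 < clusterMass m pX i := by
  obtain ⟨α, rfl⟩ := hm i
  exact sum_pos (fun β _ => hpX β) ⟨α, by simp⟩

theorem lumpedJoint_pos (hm : Function.Surjective m) (hpX : ∀ α, 0 < pX α)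
    (hP : ∀ α β, 0 < P α β) (i j : ι) : 0 < lumpedJoint m pX P i j := by
  obtain ⟨α, rfl⟩ := hm i
  obtain ⟨β, rfl⟩ := hm j
  exact sum_pos (fun α _ => sum_pos (fun β _ => mul_pos (hpX α) (hP α β)) ⟨β, by simp⟩)
    ⟨α, by simp⟩

variable [Fintype ι]

theorem sum_fiberwise_dep {M : Type*} [AddCommMonoid M] (m : X → ι) (F : X → ι → M) :
    ∑ i, ∑ α ∈ univ.filter (fun α => m α = i), F α i = ∑ α, F α (m α) := by
  rw [← sum_fiberwise univ m fun α => F α (m α)]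
  exact sum_congr rfl fun i _ => sum_congr rfl fun α hα => by rw [(mem_filter.1 hα).2]

theorem sum_clusterMass : ∑ i, clusterMass m pX i = ∑ α, pX α :=
  sum_fiberwise univ m pX

theorem sum_lumpedJoint (hP : ∀ α, ∑ β, P α β = 1) (i : ι) :
    ∑ j, lumpedJoint m pX P i j = clusterMass m pX i := by
  unfold lumpedJoint clusterMass
  rw [sum_comm]
  refine sum_congr rfl fun α _ => ?_
  rw [sum_fiberwise univ m, ← mul_sum, hP, mul_one]

theorem sum_lumpedJoint_mul (g : ι → ι → ℝ) :
    ∑ i, ∑ j, lumpedJoint m pX P i j * g i j = ∑ α, ∑ β, pX α * P α β * g (m α) (m β) := by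
  simp only [lumpedJoint, sum_mul]
  rw [← sum_fiberwise_dep m fun α i => ∑ β, pX α * P α β * g i (m β)]
  refine sum_congr rfl fun i _ => ?_
  rw [sum_comm]
  exact sum_congr rfl fun α _ => sum_fiberwise_dep m fun β j => pX α * P α β * g i j

theorem sum_clusterMass_mul {r : X → ℝ}
    (hr : ∀ i, ∑ β ∈ univ.filter (fun β => m β = i), r β = 1) :
    ∑ β, clusterMass m pX (m β) * r β = ∑ β, pX β := by
  rw [← sum_fiberwise_dep m fun β i => clusterMass m pX i * r β, ← sum_clusterMass (m := m)]
  exact sum_congr rfl fun i _ => by rw [← mul_sum, hr, mul_one]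

theorem lumpedJoint_self_lt_clusterMass (hm : Function.Surjective m) (hpX : ∀ α, 0 < pX α)
    (hP : ∀ α β, 0 < P α β) (hProw : ∀ α, ∑ β, P α β = 1) {i j : ι} (hji : j ≠ i) :
    lumpedJoint m pX P i i < clusterMass m pX i := by
  rw [← sum_lumpedJoint hProw]
  exact single_lt_sum hji (mem_univ i) (mem_univ j) (lumpedJoint_pos hm hpX hP i j)
    fun k _ _ => (lumpedJoint_pos hm hpX hP i k).le

theorem relEntropyRate_clusterKernel (hm : Function.Surjective m) (hpX : ∀ α, 0 < pX α)
    (hP : ∀ α β, 0 < P α β) (hstat : ∀ β, ∑ α, pX α * P α β = pX β) {r : X → ℝ}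
    {w : ι → ι → ℝ} (hr : ∀ β, 0 < r β) (hw : ∀ i j, 0 < w i j) :
    relEntropyRate pX P (clusterKernel m r w) =
      mutualInfo (fun α β => pX α * P α β) pX - mutualInfo (lumpedJoint m pX P) (clusterMass m pX)
        + relEntropy pX (fun β => clusterMass m pX (m β) * r β)
        + ∑ i, relEntropy (lumpedJoint m pX P i) (fun j => clusterMass m pX i * w i j) := by
  have hc := clusterMass_pos hm hpX
  have hJ := lumpedJoint_pos hm hpX hP
  have hlog : ∀ α β, log (P α β / clusterKernel m r w α β) =
      log (pX α * P α β / (pX α * pX β))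
        - log (lumpedJoint m pX P (m α) (m β) / (clusterMass m pX (m α) * clusterMass m pX (m β)))
        + log (pX β / (clusterMass m pX (m β) * r β))
        + log (lumpedJoint m pX P (m α) (m β) / (clusterMass m pX (m α) * w (m α) (m β))) := by
    intro α β
    simp only [clusterKernel, log_div, log_mul, mul_ne_zero, ne_eq, not_false_eq_true,
      (hP α β).ne', (hr β).ne', (hw _ _).ne', (hpX α).ne', (hpX β).ne', (hJ _ _).ne', (hc _).ne']
    ring
  have hX : ∑ α, ∑ β, pX α * P α β * log (pX β / (clusterMass m pX (m β) * r β)) =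
      relEntropy pX (fun β => clusterMass m pX (m β) * r β) := by
    rw [sum_comm]
    exact sum_congr rfl fun β _ => by rw [← sum_mul, hstat]
  simp only [relEntropyRate, hlog, mul_add, mul_sub, sum_add_distrib, sum_sub_distrib, hX]
  simp only [mutualInfo, relEntropy, sum_lumpedJoint_mul]

end Lumping

section RelaxedModel

variable {X ι : Type*} [DecidableEq ι] {s : ι → ℝ} {u : ι → ι → ℝ}

theorem relaxedKernel_eq_clusterKernel (m : X → ι) (r : X → ℝ) (s : ι → ℝ) (u : ι → ι → ℝ) :
    relaxedKernel m r s u = clusterKernel m r (relaxedJump s u) := by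
  funext α β
  unfold relaxedKernel clusterKernel relaxedJump
  split_ifs <;> ring

theorem relaxedJump_pos {i : ι} (hs : 0 < s i ∧ s i < 1) (hu : ∀ j, 0 < u i j) (hui : u i i < 1)
    (j : ι) : 0 < relaxedJump s u i j := by
  unfold relaxedJump
  split_ifs
  · linarith [hs.2]
  · exact div_pos (mul_pos hs.1 (hu j)) (by linarith)

theorem sum_relaxedJump [Fintype ι] {i : ι} (hui : u i i ≠ 1) (hu : ∑ j, u i j = 1) :
    ∑ j, relaxedJump s u i j = 1 := by
  have hcross : ∑ j ∈ univ.erase i, u i j = 1 - u i i := by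
    rw [sum_erase_eq_sub (mem_univ i), hu]
  have hoff : ∀ j ∈ univ.erase i, relaxedJump s u i j = s i * u i j / (1 - u i i) :=
    fun j hj => if_neg (ne_of_mem_erase hj)
  rw [← add_sum_erase _ _ (mem_univ i), sum_congr rfl hoff, ← sum_div, ← mul_sum, hcross,
    mul_div_cancel_right₀ _ (sub_ne_zero.2 hui.symm), relaxedJump, if_pos rfl]
  ring

theorem relaxedJump_eq_lumpedJoint_div [Fintype X] [Fintype ι] {m : X → ι} {pX : X → ℝ}
    {P : X → X → ℝ} (hm : Function.Surjective m) (hpX : ∀ α, 0 < pX α)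
    (hP : ∀ α β, 0 < P α β) (hProw : ∀ α, ∑ β, P α β = 1)
    (hs : ∀ i, s i = 1 - lumpedJoint m pX P i i / clusterMass m pX i)
    (hu : ∀ i j, u i j = if j = i then 0 else lumpedJoint m pX P i j / clusterMass m pX i /
      (1 - lumpedJoint m pX P i i / clusterMass m pX i)) :
    relaxedJump s u = fun i j => lumpedJoint m pX P i j / clusterMass m pX i := by
  funext i j
  unfold relaxedJump
  split_ifs with hji
  · rw [hji, hs]
    ring
  · have hstay : 1 - lumpedJoint m pX P i i / clusterMass m pX i ≠ 0 :=
      sub_ne_zero.2 (ne_of_gt ((div_lt_one (clusterMass_pos hm hpX i)).2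
        (lumpedJoint_self_lt_clusterMass hm hpX hP hProw hji)))
    rw [hs, hu, hu, if_pos rfl, if_neg hji, sub_zero, div_one, mul_div_cancel₀ _ hstay]

end RelaxedModel

theorem relaxed_minimum_and_lower_bound_general {X : Type*} [Fintype X] {K : ℕ}
    (m : X → Fin K) (hm : Function.Surjective m)
    (pX : X → ℝ) (hpX0 : ∀ α, 0 < pX α)
    (P : X → X → ℝ) (hPpos : ∀ α β, 0 < P α β) (hProw : ∀ α, ∑ β, P α β = 1)
    (hstat : ∀ β, ∑ α, pX α * P α β = pX β)
    (pclust : Fin K → ℝ)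
    (hpclust : ∀ i, pclust i = ∑ α ∈ Finset.univ.filter (fun α => m α = i), pX α)
    (Jy : Fin K → Fin K → ℝ)
    (hJy : ∀ i j, Jy i j = ∑ α ∈ Finset.univ.filter (fun α => m α = i),
      ∑ β ∈ Finset.univ.filter (fun β => m β = j), pX α * P α β)
    (pii : Fin K → ℝ) (hpii : ∀ i, pii i = Jy i i / pclust i)
    (rstar : X → ℝ) (hrstar : ∀ β, rstar β = pX β / pclust (m β))
    (sstar : Fin K → ℝ) (hsstar : ∀ i, sstar i = 1 - pii i)
    (ustar : Fin K → Fin K → ℝ)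
    (hustar : ∀ i j, ustar i j =
      if j = i then 0 else (Jy i j / pclust i) / (1 - pii i))
    (qrel : X → X → ℝ)
    (hqrel : ∀ α β, qrel α β = if m β = m α then rstar β * (1 - sstar (m α))
      else rstar β * sstar (m α) * ustar (m α) (m β) / (1 - ustar (m α) (m α)))
    (IX IY : ℝ)
    (hIX : IX = ∑ α, ∑ β,
      pX α * P α β * Real.log ((pX α * P α β) / (pX α * pX β)))
    (hIY : IY = ∑ i, ∑ j, Jy i j * Real.log (Jy i j / (pclust i * pclust j))) :
    (∑ α, ∑ β, pX α * P α β * Real.log (P α β / qrel α β) = IX - IY) ∧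
    (∀ (r : X → ℝ) (s u : Fin K → ℝ),
      (∀ β, 0 < r β) →
      (∀ i, ∑ β ∈ Finset.univ.filter (fun β => m β = i), r β = 1) →
      (∀ i, 0 < s i ∧ s i < 1) →
      (∀ i, 0 < u i ∧ u i < 1) → (∑ i, u i = 1) →
      IX - IY ≤ ∑ α, ∑ β, pX α * P α β *
        Real.log (P α β / (if m β = m α then r β * (1 - s (m α))
          else r β * s (m α) * u (m β) / (1 - u (m α))))) := by
  obtain rfl : pclust = clusterMass m pX := funext hpclust
  obtain rfl : Jy = lumpedJoint m pX P := funext fun i => funext (hJy i)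
  obtain rfl : rstar = fun β => pX β / clusterMass m pX (m β) := funext hrstar
  obtain rfl : qrel = relaxedKernel m _ sstar ustar := funext fun α => funext (hqrel α)
  obtain rfl : IX = mutualInfo (fun α β => pX α * P α β) pX := hIX
  obtain rfl : IY = mutualInfo (lumpedJoint m pX P) (clusterMass m pX) := hIY
  simp only [hpii] at hsstar hustar
  have hc := clusterMass_pos hm hpX0
  have hJ := lumpedJoint_pos hm hpX0 hPpos
  refine ⟨?_, fun r s u hr hr1 hs hu hu1 => ?_⟩
  · show relEntropyRate pX P _ = _
    rw [relaxedKernel_eq_clusterKernel,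
      relaxedJump_eq_lumpedJoint_div hm hpX0 hPpos hProw hsstar hustar,
      relEntropyRate_clusterKernel hm hpX0 hPpos hstat (fun β => div_pos (hpX0 β) (hc _))
        (fun i j => div_pos (hJ i j) (hc i))]
    simp only [mul_div_cancel₀ _ (hc _).ne', relEntropy_self, sum_const_zero, add_zero]
  · have hw i := relaxedJump_pos (u := fun _ => u) (hs i) (fun j => (hu j).1) (hu i).2
    have hrow i : ∑ j, clusterMass m pX i * relaxedJump s (fun _ => u) i j =
        ∑ j, lumpedJoint m pX P i j := by
      rw [← mul_sum, sum_relaxedJump (hu i).2.ne hu1, mul_one, sum_lumpedJoint hProw]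
    have hX := relEntropy_nonneg (fun β => (hpX0 β).le) (fun β => mul_pos (hc (m β)) (hr β))
      (sum_clusterMass_mul hr1).le
    have hY := sum_nonneg fun i (_ : i ∈ univ) => relEntropy_nonneg (fun j => (hJ i j).le)
      (fun j => mul_pos (hc i) (hw i j)) (hrow i).le
    show _ ≤ relEntropyRate pX P (relaxedKernel m r s fun _ => u)
    rw [relaxedKernel_eq_clusterKernel, relEntropyRate_clusterKernel hm hpX0 hPpos hstat hr hw]
    linarith

/-- Let `{X_t}` be a stationary Markov chain on finite `X` (stationary
distribution `pX`, positive transition kernel `P`) and `Y_t = m (X_t)` for a partition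
map `m`. With the optimal within-cluster parameters `r* β = pX β / p_{m β}`, staying
parameters `s* i = 1 - p_{i→i}`, and the relaxed per-origin cluster distributions
`u*ⁱ j = p_{i→j} / p_{i↛i}` for `j ≠ i` (and `u*ⁱ i = 0`), the relaxed relative entropy
rate equals `I(X_t;X_{t-1}) - I(Y_t;Y_{t-1})`. Consequently, since the non-relaxed
minimum (a single cross-cluster distribution `u`) is at least the relaxed minimum,
`I(X_t;X_{t-1}) - I(Y_t;Y_{t-1}) ≤ D(P‖Q^Y)` for every admissible `(r, s, u)`. -/
theorem relaxed_minimum_and_lower_bound {X : Type*} [Fintype X] {K : ℕ}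
    (m : X → Fin K) (hm : Function.Surjective m)
    (pX : X → ℝ) (hpX0 : ∀ α, 0 < pX α) (hpX1 : ∑ α, pX α = 1)
    (P : X → X → ℝ) (hPpos : ∀ α β, 0 < P α β) (hProw : ∀ α, ∑ β, P α β = 1)
    (hstat : ∀ β, ∑ α, pX α * P α β = pX β)
    (pclust : Fin K → ℝ)
    (hpclust : ∀ i, pclust i = ∑ α ∈ Finset.univ.filter (fun α => m α = i), pX α)
    (Jy : Fin K → Fin K → ℝ)
    (hJy : ∀ i j, Jy i j = ∑ α ∈ Finset.univ.filter (fun α => m α = i),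
      ∑ β ∈ Finset.univ.filter (fun β => m β = j), pX α * P α β)
    (pii : Fin K → ℝ) (hpii : ∀ i, pii i = Jy i i / pclust i)
    (rstar : X → ℝ) (hrstar : ∀ β, rstar β = pX β / pclust (m β))
    (sstar : Fin K → ℝ) (hsstar : ∀ i, sstar i = 1 - pii i)
    (ustar : Fin K → Fin K → ℝ)
    (hustar : ∀ i j, ustar i j =
      if j = i then 0 else (Jy i j / pclust i) / (1 - pii i))
    (qrel : X → X → ℝ)
    (hqrel : ∀ α β, qrel α β = if m β = m α then rstar β * (1 - sstar (m α))
      else rstar β * sstar (m α) * ustar (m α) (m β) / (1 - ustar (m α) (m α)))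
    (IX IY : ℝ)
    (hIX : IX = ∑ α, ∑ β,
      pX α * P α β * Real.log ((pX α * P α β) / (pX α * pX β)))
    (hIY : IY = ∑ i, ∑ j, Jy i j * Real.log (Jy i j / (pclust i * pclust j))) :
    (∑ α, ∑ β, pX α * P α β * Real.log (P α β / qrel α β) = IX - IY) ∧
    (∀ (r : X → ℝ) (s u : Fin K → ℝ),
      (∀ β, 0 < r β) →
      (∀ i, ∑ β ∈ Finset.univ.filter (fun β => m β = i), r β = 1) →
      (∀ i, 0 < s i ∧ s i < 1) →
      (∀ i, 0 < u i ∧ u i < 1) → (∑ i, u i = 1) →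
      IX - IY ≤ ∑ α, ∑ β, pX α * P α β *
        Real.log (P α β / (if m β = m α then r β * (1 - s (m α))
          else r β * s (m α) * u (m β) / (1 - u (m α))))) :=
  relaxed_minimum_and_lower_bound_general m hm pX hpX0 P hPpos hProw hstat pclust hpclust Jy hJy pii
    hpii rstar hrstar sstar hsstar ustar hustar qrel hqrel IX IY hIX hIY
end
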